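/- arXiv:1610.01760 — 3 statements merged into one kernel-verified Lean document; each statement's English description precedes it below -/
import Mathlib

section
/- Let L and M be complete lattices and let f : L → M be a complete lattice homomorphism. If a set filter 𝓕 on L order-converges to x ∈ L, then the image filter f(𝓕) (the filter on M generated by the filter base {f(F) : F ∈ 𝓕}) order-converges to f(x). -/
/-! If `b` bounds from above a set `S` of the image filter, then `sSup (f ⁻¹' S)` lies in `𝓕ᵘ` and
`f` maps it below `b`, because `f` preserves suprema; conversely the monotone map `f` sends `𝓕ᵘ`
into `(map f 𝓕)ᵘ`. Hence `inf (map f 𝓕)ᵘ = f (inf 𝓕ᵘ)`, and dually for lower bounds. -/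

/-- `𝓕ᵘ`: the union of the sets of upper bounds of the members of the filter `𝓕`. -/
def filterUpperBounds {P : Type*} [Preorder P] (𝓕 : Filter P) : Set P :=
  ⋃ F ∈ 𝓕.sets, upperBounds F

/-- `𝓕ˡ`: the union of the sets of lower bounds of the members of the filter `𝓕`. -/
def filterLowerBounds {P : Type*} [Preorder P] (𝓕 : Filter P) : Set P :=
  ⋃ F ∈ 𝓕.sets, lowerBounds F

/-- A filter `𝓕` on a complete lattice order-converges to `x` if `inf 𝓕ᵘ = x = sup 𝓕ˡ`. -/
def OrderConverges {P : Type*} [CompleteLattice P] (𝓕 : Filter P) (x : P) : Prop :=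
  sInf (filterUpperBounds 𝓕) = x ∧ sSup (filterLowerBounds 𝓕) = x

theorem image_filterUpperBounds_subset {P Q : Type*} [Preorder P] [Preorder Q] {f : P → Q}
    (hf : Monotone f) (𝓕 : Filter P) :
    f '' filterUpperBounds 𝓕 ⊆ filterUpperBounds (𝓕.map f) := by
  rintro _ ⟨a, ha, rfl⟩
  simp only [filterUpperBounds, Set.mem_iUnion] at ha ⊢
  obtain ⟨F, hF, haF⟩ := ha
  exact ⟨f '' F, Filter.image_mem_map hF, hf.mem_upperBounds_image haF⟩

section

variable {L M : Type*} [CompleteLattice L] [CompleteLattice M] {f : L → M}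

theorem sInf_filterUpperBounds_map_le (hf : ∀ S : Set L, f (sInf S) = sInf (f '' S))
    (𝓕 : Filter L) :
    sInf (filterUpperBounds (𝓕.map f)) ≤ f (sInf (filterUpperBounds 𝓕)) := by
  have hmono : Monotone f := OrderHomClass.mono (sInfHom.mk f hf)
  rw [hf]
  exact sInf_le_sInf (image_filterUpperBounds_subset hmono 𝓕)

theorem le_sInf_filterUpperBounds_map (hf : ∀ S : Set L, f (sSup S) = sSup (f '' S))
    (𝓕 : Filter L) :
    f (sInf (filterUpperBounds 𝓕)) ≤ sInf (filterUpperBounds (𝓕.map f)) := by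
  have hmono : Monotone f := OrderHomClass.mono (sSupHom.mk f hf)
  refine le_sInf fun b hb => ?_
  simp only [filterUpperBounds, Set.mem_iUnion] at hb
  obtain ⟨S, hS, hbS⟩ := hb
  have hsSup_mem : sSup (f ⁻¹' S) ∈ filterUpperBounds 𝓕 := by
    simp only [filterUpperBounds, Set.mem_iUnion]
    exact ⟨f ⁻¹' S, hS, fun y hy => le_sSup hy⟩
  calc f (sInf (filterUpperBounds 𝓕)) ≤ f (sSup (f ⁻¹' S)) := hmono (sInf_le hsSup_mem)
    _ = sSup (f '' (f ⁻¹' S)) := hf _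
    _ ≤ sSup S := sSup_le_sSup (Set.image_preimage_subset f S)
    _ ≤ b := sSup_le hbS

theorem sInf_filterUpperBounds_map (hsSup : ∀ S : Set L, f (sSup S) = sSup (f '' S))
    (hsInf : ∀ S : Set L, f (sInf S) = sInf (f '' S)) (𝓕 : Filter L) :
    sInf (filterUpperBounds (𝓕.map f)) = f (sInf (filterUpperBounds 𝓕)) :=
  (sInf_filterUpperBounds_map_le hsInf 𝓕).antisymm (le_sInf_filterUpperBounds_map hsSup 𝓕)

theorem sSup_filterLowerBounds_map (hsSup : ∀ S : Set L, f (sSup S) = sSup (f '' S))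
    (hsInf : ∀ S : Set L, f (sInf S) = sInf (f '' S)) (𝓕 : Filter L) :
    sSup (filterLowerBounds (𝓕.map f)) = f (sSup (filterLowerBounds 𝓕)) :=
  -- In `Lᵒᵈ`, `filterLowerBounds` and `sSup` are definitionally `filterUpperBounds` and `sInf`.
  sInf_filterUpperBounds_map (L := Lᵒᵈ) (M := Mᵒᵈ) hsInf hsSup 𝓕

end

theorem orderConverges_map_of_completeLatticeHom_general
    {L M : Type*} [CompleteLattice L] [CompleteLattice M] (f : L → M)
    (hsSup : ∀ S : Set L, f (sSup S) = sSup (f '' S))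
    (hsInf : ∀ S : Set L, f (sInf S) = sInf (f '' S))
    (𝓕 : Filter L) (x : L) (h : OrderConverges 𝓕 x) :
    OrderConverges (𝓕.map f) (f x) :=
  ⟨by rw [sInf_filterUpperBounds_map hsSup hsInf, h.1],
    by rw [sSup_filterLowerBounds_map hsSup hsInf, h.2]⟩

/-- If `f : L → M` is a complete lattice homomorphism between complete lattices and the
(proper) set filter `𝓕` on `L` order-converges to `x`, then the image filter `f(𝓕)`
order-converges to `f x`. -/
theorem orderConverges_map_of_completeLatticeHom
    {L M : Type*} [CompleteLattice L] [CompleteLattice M] (f : L → M)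
    (hsSup : ∀ S : Set L, f (sSup S) = sSup (f '' S))
    (hsInf : ∀ S : Set L, f (sInf S) = sInf (f '' S))
    (𝓕 : Filter L) [𝓕.NeBot] (x : L) (h : OrderConverges 𝓕 x) :
    OrderConverges (𝓕.map f) (f x) :=
  orderConverges_map_of_completeLatticeHom_general f hsSup hsInf 𝓕 x h
end

section
/- Let 2 = {0,1} be the two-element chain with 0 < 1 and let 2^ω be the set of all functions ω → 2 with the pointwise (componentwise) order. The interval topology on 2^ω coincides with the product topology on 2^ω obtained from the discrete topology on each factor 2 (i.e., with the topology of the Cantor space). -/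
/-!
The interval topology commutes with products of bounded posets. In the product, `Ici a` and
`Iic a` are products of principal up- and down-sets, hence closed in the product topology.
Conversely the projection to the `i`-th factor is continuous for the interval topologies, since
the preimage of `Iic b` is `Iic (update ⊤ i b)` and that of `Ici b` is `Ici (update ⊥ i b)`.
On `2` the interval topology is discrete: `{0} = (Ici 1)ᶜ` and `{1} = (Iic 0)ᶜ`.
-/

open Set Topology

/-- The interval topology on a preorder: the topology whose closed sets are generated by
the subbasis of all principal down-sets `↓x = Iic x` and all principal up-sets `↑x = Ici x`,
i.e. the topology generated by the complements of these sets. -/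
def intervalTopology (α : Type*) [Preorder α] : TopologicalSpace α :=
  TopologicalSpace.generateFrom {s | ∃ a : α, s = (Set.Ici a)ᶜ ∨ s = (Set.Iic a)ᶜ}

open Function

lemma le_intervalTopology_iff {α : Type*} [Preorder α] {t : TopologicalSpace α} :
    t ≤ intervalTopology α ↔ ∀ a : α, IsClosed[t] (Ici a) ∧ IsClosed[t] (Iic a) := by
  simp only [intervalTopology, TopologicalSpace.le_generateFrom_iff_subset_isOpen, subset_def,
    mem_ofPred_eq, ← isOpen_compl_iff]
  constructor
  · exact fun h a => ⟨h _ ⟨a, .inl rfl⟩, h _ ⟨a, .inr rfl⟩⟩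
  · rintro h _ ⟨a, rfl | rfl⟩
    exacts [(h a).1, (h a).2]

lemma continuous_intervalTopology_iff {α β : Type*} [Preorder β] {t : TopologicalSpace α}
    {f : α → β} : Continuous[t, intervalTopology β] f ↔
      ∀ b : β, IsClosed[t] (f ⁻¹' Ici b) ∧ IsClosed[t] (f ⁻¹' Iic b) := by
  rw [intervalTopology, continuous_generateFrom_iff]
  simp only [mem_ofPred_eq, ← isOpen_compl_iff, ← preimage_compl]
  constructor
  · exact fun h b => ⟨h _ ⟨b, .inl rfl⟩, h _ ⟨b, .inr rfl⟩⟩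
  · rintro h _ ⟨b, rfl | rfl⟩
    exacts [(h b).1, (h b).2]

lemma isClosed_Ici_intervalTopology {α : Type*} [Preorder α] (a : α) :
    IsClosed[intervalTopology α] (Ici a) :=
  (le_intervalTopology_iff.1 le_rfl a).1

lemma isClosed_Iic_intervalTopology {α : Type*} [Preorder α] (a : α) :
    IsClosed[intervalTopology α] (Iic a) :=
  (le_intervalTopology_iff.1 le_rfl a).2

section Pi

variable {ι : Type*} {α : ι → Type*} [∀ i, Preorder (α i)]

lemma Iic_update_top [DecidableEq ι] [∀ i, OrderTop (α i)] (i : ι) (b : α i) :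
    Iic (update (⊤ : ∀ i, α i) i b) = eval i ⁻¹' Iic b := by
  ext f
  simp [le_update_iff]

lemma Ici_update_bot [DecidableEq ι] [∀ i, OrderBot (α i)] (i : ι) (b : α i) :
    Ici (update (⊥ : ∀ i, α i) i b) = eval i ⁻¹' Ici b := by
  ext f
  simp [update_le_iff]

lemma continuous_apply_intervalTopology [∀ i, OrderTop (α i)] [∀ i, OrderBot (α i)] (i : ι) :
    Continuous[intervalTopology (∀ i, α i), intervalTopology (α i)] (eval i) := by
  classical
  refine continuous_intervalTopology_iff.2 fun b => ⟨?_, ?_⟩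
  · exact Ici_update_bot i b ▸ isClosed_Ici_intervalTopology _
  · exact Iic_update_top i b ▸ isClosed_Iic_intervalTopology _

theorem intervalTopology_pi [∀ i, OrderTop (α i)] [∀ i, OrderBot (α i)] :
    intervalTopology (∀ i, α i) = @Pi.topologicalSpace ι α fun i => intervalTopology (α i) := by
  let (i : ι) : TopologicalSpace (α i) := intervalTopology (α i)
  refine le_antisymm (le_iInf fun i => ?_) (le_intervalTopology_iff.2 fun a => ⟨?_, ?_⟩)
  · exact continuous_iff_le_induced.1 (continuous_apply_intervalTopology i)
  · exact pi_univ_Ici a ▸ isClosed_set_pi fun i _ => isClosed_Ici_intervalTopology _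
  · exact pi_univ_Iic a ▸ isClosed_set_pi fun i _ => isClosed_Iic_intervalTopology _

end Pi

theorem intervalTopology_bool : intervalTopology Bool = ⊥ := by
  refine eq_bot_of_singletons_open fun b => ?_
  cases b
  · convert (isClosed_Ici_intervalTopology true).isOpen_compl using 1
    ext b; cases b <;> simp
  · convert (isClosed_Iic_intervalTopology false).isOpen_compl using 1
    ext b; cases b <;> simp

/-- The interval topology on `2^ω` (the functions `ω → 2` with the pointwise order, where
`2 = {0 < 1}` is modelled by `Bool` with `false < true`) coincides with the product topology
obtained from the discrete topology on each factor, i.e. with the Cantor space topology. -/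
theorem intervalTopology_cantor :
    intervalTopology (ℕ → Bool) = @Pi.topologicalSpace ℕ (fun _ => Bool) (fun _ => ⊥) := by
  rw [intervalTopology_pi, intervalTopology_bool]
end

section
/- Let 2 = {0,1} with 0 < 1 and let 2^ω be the set of all functions ω → 2 with the pointwise order. The interval topology on 2^ω is Hausdorff. -/
/-! The basic open sets `{f | f i = true}` and `{f | f i = false}` of the product topology on
`ι → Bool` are complements of a principal down-set and of a principal up-set respectively, so
the interval topology refines the product topology, which is Hausdorff. -/

open Set Topology

open Function

section BoolPi

variable {ι : Type*}

theorem setOf_apply_eq_true_eq_compl_Iic [DecidableEq ι] (i : ι) :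
    {f : ι → Bool | f i = true} = (Iic (update ⊤ i false))ᶜ := by
  ext f
  simp [le_update_iff, Bool.le_iff_imp]

theorem setOf_apply_eq_false_eq_compl_Ici [DecidableEq ι] (i : ι) :
    {f : ι → Bool | f i = false} = (Ici (update ⊥ i true))ᶜ := by
  ext f
  simp [update_le_iff, Bool.le_iff_imp]

theorem continuous_apply_intervalTopology_s8 (i : ι) :
    Continuous[intervalTopology (ι → Bool), _] (fun f : ι → Bool => f i) := by
  classical
  let := intervalTopology (ι → Bool)
  refine continuous_discrete_rng.mpr fun b => ?_
  cases b
  · change IsOpen {f : ι → Bool | f i = false}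
    rw [setOf_apply_eq_false_eq_compl_Ici]
    exact TopologicalSpace.isOpen_generateFrom_of_mem ⟨_, Or.inl rfl⟩
  · change IsOpen {f : ι → Bool | f i = true}
    rw [setOf_apply_eq_true_eq_compl_Iic]
    exact TopologicalSpace.isOpen_generateFrom_of_mem ⟨_, Or.inr rfl⟩

theorem intervalTopology_pi_bool_le_pi : intervalTopology (ι → Bool) ≤ Pi.topologicalSpace :=
  le_iInf fun i => (continuous_apply_intervalTopology_s8 i).le_induced

theorem t2Space_intervalTopology_pi_bool :
    @T2Space (ι → Bool) (intervalTopology (ι → Bool)) :=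
  t2Space_antitone intervalTopology_pi_bool_le_pi Pi.t2Space

end BoolPi

/-- The interval topology on `2^ω` (functions `ω → 2` with the pointwise order, where
`2 = {0 < 1}` is modelled by `Bool` with `false < true`) is Hausdorff. -/
theorem intervalTopology_cantor_t2 :
    @T2Space (ℕ → Bool) (intervalTopology (ℕ → Bool)) :=
  t2Space_intervalTopology_pi_bool
end
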